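/- For every positive integer n, the parallelogram with side lengths 1 and n√2, namely convexHull{(0,0),(1,0),(n+1,n),(n,n)} ⊆ ℝ², is tileable by 2n copies of T. -/

import Mathlib

/-
The parallelogram is a stack of `n` translates, along `(1,1)`, of the unit parallelogram with
vertices `(0,0), (1,0), (2,1), (1,1)`. Its short diagonal cuts each of these into a mirror image
of `T` and the half-turn of that mirror image. Distinct layers are separated by horizontal lines
and the two halves of a layer by a vertical line; since a coordinate projection is an open map,
sets on opposite sides of such a line have disjoint interiors.
-/

open Real

noncomputable section

/-- The Euclidean plane `ℝ²`. -/
abbrev Pt : Type := EuclideanSpace ℝ (Fin 2)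

/-- The point `(x, y)` of the plane. -/
def pt (x y : ℝ) : Pt := (WithLp.equiv 2 (Fin 2 → ℝ)).symm ![x, y]

/-- The closed isosceles right triangle with vertices `(0,0)`, `(1,0)`, `(0,1)`. -/
def T : Set Pt := convexHull ℝ {pt 0 0, pt 1 0, pt 0 1}

/-- `S` is tileable by `n` copies of `T`: there are isometries `f₁, …, fₙ` of the plane
(possibly orientation-reversing) such that the sets `fᵢ(T)` have pairwise disjoint
interiors and their union is `S`. -/
def TileableBy (S : Set Pt) (n : ℕ) : Prop :=
  ∃ f : Fin n → (Pt ≃ᵢ Pt),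
    (∀ i j, i ≠ j → Disjoint (interior (f i '' T)) (interior (f j '' T))) ∧
    S = ⋃ i, f i '' T

/-- Two subsets of the plane are congruent if some isometry maps one onto the other. -/
def CongruentSets (P Q : Set Pt) : Prop := ∃ f : Pt ≃ᵢ Pt, f '' P = Q

/-- The family of pieces `P₁, …, P_k` forms `S`: there are isometries `g₁, …, g_k` of the
plane such that the sets `gᵢ(Pᵢ)` have pairwise disjoint interiors and their union is `S`. -/
def Forms {k : ℕ} (P : Fin k → Set Pt) (S : Set Pt) : Prop :=
  ∃ g : Fin k → (Pt ≃ᵢ Pt),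
    (∀ i j, i ≠ j → Disjoint (interior (g i '' P i)) (interior (g j '' P j))) ∧
    S = ⋃ i, g i '' P i

open Set Function

@[simp] lemma pt_apply_zero (x y : ℝ) : pt x y 0 = x := rfl

@[simp] lemma pt_apply_one (x y : ℝ) : pt x y 1 = y := rfl

lemma disjoint_interior_of_le_of_ge {X : Type*} [TopologicalSpace X] {f : X → ℝ}
    (hf : IsOpenMap f) {A B : Set X} {c : ℝ} (hA : ∀ p ∈ A, f p ≤ c) (hB : ∀ p ∈ B, c ≤ f p) :
    Disjoint (interior A) (interior B) := by
  have hA' : f '' interior A ⊆ Iio c := by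
    rw [← interior_Iic]
    exact (hf.image_interior_subset A).trans (interior_mono (image_subset_iff.2 hA))
  have hB' : f '' interior B ⊆ Ioi c := by
    rw [← interior_Ici]
    exact (hf.image_interior_subset B).trans (interior_mono (image_subset_iff.2 hB))
  exact disjoint_left.2 fun p hpA hpB =>
    lt_asymm (mem_Iio.1 (hA' (mem_image_of_mem f hpA))) (mem_Ioi.1 (hB' (mem_image_of_mem f hpB)))

lemma EuclideanSpace.isOpenMap_apply {ι : Type*} [Fintype ι] [DecidableEq ι] (i : ι) :
    IsOpenMap fun p : EuclideanSpace ℝ ι => p i :=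
  (EuclideanSpace.proj i : EuclideanSpace ℝ ι →L[ℝ] ℝ).isOpenMap fun c =>
    ⟨EuclideanSpace.single i c, by simp⟩

lemma tileableBy_of_equiv {ι : Type*} {S : Set Pt} {n : ℕ} (e : ι ≃ Fin n) (f : ι → Pt ≃ᵢ Pt)
    (hd : Pairwise (Disjoint on fun i => interior (f i '' T))) (hS : S = ⋃ i, f i '' T) :
    TileableBy S n :=
  ⟨f ∘ e.symm, fun _ _ hij => hd (e.symm.injective.ne hij), by
    rw [hS, ← e.symm.surjective.iUnion_comp]; rfl⟩

lemma tileableBy_image_T (f : Pt ≃ᵢ Pt) : TileableBy (f '' T) 1 :=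
  tileableBy_of_equiv (Equiv.refl _) (fun _ => f) Subsingleton.pairwise (iUnion_const _).symm

lemma TileableBy.image {S : Set Pt} {m : ℕ} (h : TileableBy S m) (e : Pt ≃ᵢ Pt) :
    TileableBy (e '' S) m := by
  obtain ⟨f, hd, rfl⟩ := h
  have himage : ∀ i, (f i).trans e '' T = e.toHomeomorph '' (f i '' T) := fun i =>
    image_comp e (f i) T
  refine tileableBy_of_equiv (Equiv.refl _) (fun i => (f i).trans e) (fun i j hij => ?_) ?_
  · simp only [onFun, himage, ← Homeomorph.image_interior]
    exact (disjoint_image_iff e.injective).2 (hd i j hij)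
  · simp only [himage, image_iUnion, IsometryEquiv.coe_toHomeomorph]

lemma TileableBy.union {A B : Set Pt} {m m' : ℕ} (hA : TileableBy A m) (hB : TileableBy B m')
    (hAB : Disjoint (interior A) (interior B)) : TileableBy (A ∪ B) (m + m') := by
  obtain ⟨f, hf, rfl⟩ := hA
  obtain ⟨g, hg, rfl⟩ := hB
  have hsub : ∀ {ι : Type} (h : ι → Pt ≃ᵢ Pt) i, interior (h i '' T) ⊆ interior (⋃ j, h j '' T) :=
    fun h i => interior_mono (subset_iUnion (fun j => h j '' T) i)
  refine tileableBy_of_equiv finSumFinEquiv (Sum.elim f g) ?_ (by rw [iUnion_sum]; rfl)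
  rintro (a | a) (b | b) hab
  · exact hf a b (ne_of_apply_ne _ hab)
  · exact hAB.mono (hsub f a) (hsub g b)
  · exact hAB.symm.mono (hsub g a) (hsub f b)
  · exact hg a b (ne_of_apply_ne _ hab)

lemma T_eq_setOf : T = {p : Pt | 0 ≤ p 0 ∧ 0 ≤ p 1 ∧ p 0 + p 1 ≤ 1} := by
  refine (convexHull_min ?_ ?_).antisymm fun p ⟨hx, hy, hxy⟩ => ?_
  · rintro p (rfl | rfl | rfl) <;> norm_num
  · rintro p ⟨hp₀, hp₁, hp⟩ q ⟨hq₀, hq₁, hq⟩ a b ha hb hab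
    refine ⟨?_, ?_, ?_⟩ <;> simp only [PiLp.add_apply, PiLp.smul_apply, smul_eq_mul] <;> nlinarith
  have hmem : ∑ i, ![1 - p 0 - p 1, p 0, p 1] i • ![pt 0 0, pt 1 0, pt 0 1] i ∈
      convexHull ℝ {pt 0 0, pt 1 0, pt 0 1} :=
    (convex_convexHull ℝ _).sum_mem (fun i _ => by fin_cases i <;> simp <;> linarith)
      (by simp [Fin.sum_univ_three]; ring)
      (fun i _ => subset_convexHull ℝ _ (by fin_cases i <;> simp))
  convert hmem using 1
  ext i; fin_cases i <;> simp [Fin.sum_univ_three]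

def parallelogram (h : ℝ) : Set Pt := {p | 0 ≤ p 1 ∧ p 1 ≤ h ∧ p 1 ≤ p 0 ∧ p 0 ≤ p 1 + 1}

lemma convexHull_eq_parallelogram {h : ℝ} (hh : 0 < h) :
    convexHull ℝ {pt 0 0, pt 1 0, pt (h + 1) h, pt h h} = parallelogram h := by
  refine (convexHull_min ?_ ?_).antisymm fun p ⟨hy₀, hyh, hyx, hxy⟩ => ?_
  · rintro p (rfl | rfl | rfl | rfl) <;> simp [parallelogram, hh.le]
  · rintro p ⟨hp₁, hp₂, hp₃, hp₄⟩ q ⟨hq₁, hq₂, hq₃, hq₄⟩ a b ha hb hab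
    refine ⟨?_, ?_, ?_, ?_⟩ <;> simp only [PiLp.add_apply, PiLp.smul_apply, smul_eq_mul] <;>
      nlinarith
  -- `p = s • (1, 0) + t • (h, h)`, spread bilinearly over the four vertices
  set s := p 0 - p 1
  set t := p 1 / h
  have hs : 0 ≤ s ∧ 0 ≤ 1 - s := ⟨by linarith, by linarith⟩
  have ht : 0 ≤ t ∧ 0 ≤ 1 - t :=
    ⟨div_nonneg hy₀ hh.le, sub_nonneg.2 ((div_le_one hh).2 hyh)⟩
  have hmem : ∑ i, ![(1 - t) * (1 - s), (1 - t) * s, t * s, t * (1 - s)] i •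
      ![pt 0 0, pt 1 0, pt (h + 1) h, pt h h] i ∈
        convexHull ℝ {pt 0 0, pt 1 0, pt (h + 1) h, pt h h} :=
    (convex_convexHull ℝ _).sum_mem
      (fun i _ => by fin_cases i <;> simp <;> apply mul_nonneg <;> tauto)
      (by simp [Fin.sum_univ_four]; ring)
      (fun i _ => subset_convexHull ℝ _ (by fin_cases i <;> simp))
  convert hmem using 1
  ext i; fin_cases i <;> simp [Fin.sum_univ_four, t, s] <;> field_simp <;> ring

def reflectX : Pt ≃ᵢ Pt :=
  IsometryEquiv.mk' (fun p => pt (1 - p 0) (p 1)) (fun p => pt (1 - p 0) (p 1))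
    (fun p => by ext i; fin_cases i <;> simp)
    (Isometry.of_dist_eq fun p q => by simp [EuclideanSpace.dist_eq, Real.dist_eq]; ring_nf)

lemma mem_reflectX_image_T {p : Pt} : p ∈ reflectX '' T ↔ 0 ≤ p 1 ∧ p 1 ≤ p 0 ∧ p 0 ≤ 1 := by
  rw [← reflectX.symm_symm, IsometryEquiv.image_symm, T_eq_setOf]
  change 0 ≤ 1 - p 0 ∧ 0 ≤ p 1 ∧ 1 - p 0 + p 1 ≤ 1 ↔ _
  constructor <;> rintro ⟨h₁, h₂, h₃⟩ <;> exact ⟨by linarith, by linarith, by linarith⟩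

lemma mem_pointReflection_image_iff {c p : Pt} {S : Set Pt} :
    p ∈ (AffineIsometryEquiv.pointReflection ℝ c).toIsometryEquiv '' S ↔ c - p + c ∈ S := by
  rw [← IsometryEquiv.symm_symm (AffineIsometryEquiv.toIsometryEquiv _), IsometryEquiv.image_symm,
    ← AffineIsometryEquiv.toIsometryEquiv_symm, AffineIsometryEquiv.pointReflection_symm]
  rfl

lemma mem_addRight_image_iff {v p : Pt} {S : Set Pt} :
    p ∈ IsometryEquiv.addRight v '' S ↔ p - v ∈ S := by
  rw [← IsometryEquiv.symm_symm (IsometryEquiv.addRight v), IsometryEquiv.image_symm]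
  rfl

lemma parallelogram_one_eq : parallelogram 1 = reflectX '' T ∪
    (AffineIsometryEquiv.pointReflection ℝ (pt 1 (1 / 2))).toIsometryEquiv '' (reflectX '' T) := by
  ext p
  rw [mem_union, mem_pointReflection_image_iff, mem_reflectX_image_T, mem_reflectX_image_T]
  simp only [parallelogram, mem_ofPred_eq, PiLp.add_apply, PiLp.sub_apply, pt_apply_zero,
    pt_apply_one]
  constructor
  · rintro ⟨h₁, h₂, h₃, h₄⟩
    rcases le_total (p 0) 1 with h | h
    · exact .inl ⟨h₁, h₃, h⟩
    · exact .inr ⟨by linarith, by linarith, by linarith⟩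
  · rintro (⟨h₁, h₂, h₃⟩ | ⟨h₁, h₂, h₃⟩) <;>
      exact ⟨by linarith, by linarith, by linarith, by linarith⟩

lemma tileableBy_parallelogram_one : TileableBy (parallelogram 1) 2 := by
  rw [parallelogram_one_eq]
  refine (tileableBy_image_T _).union ((tileableBy_image_T _).image _)
    (disjoint_interior_of_le_of_ge (EuclideanSpace.isOpenMap_apply 0) (c := 1) ?_ ?_)
  · exact fun p hp => (mem_reflectX_image_T.1 hp).2.2
  · intro p hp
    have h := (mem_reflectX_image_T.1 (mem_pointReflection_image_iff.1 hp)).2.2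
    simp only [PiLp.add_apply, PiLp.sub_apply, pt_apply_zero] at h
    linarith

lemma parallelogram_add {a b : ℝ} (ha : 0 ≤ a) (hb : 0 ≤ b) :
    parallelogram (a + b) =
      parallelogram a ∪ IsometryEquiv.addRight (pt a a) '' parallelogram b := by
  ext p
  simp only [mem_union, mem_addRight_image_iff, parallelogram, mem_ofPred_eq, PiLp.sub_apply,
    pt_apply_zero, pt_apply_one]
  constructor
  · rintro ⟨h₁, h₂, h₃, h₄⟩
    rcases le_total (p 1) a with h | h
    · exact .inl ⟨h₁, h, h₃, h₄⟩
    · exact .inr ⟨by linarith, by linarith, by linarith, by linarith⟩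
  · rintro (⟨h₁, h₂, h₃, h₄⟩ | ⟨h₁, h₂, h₃, h₄⟩) <;>
      exact ⟨by linarith, by linarith, by linarith, by linarith⟩

lemma disjoint_interior_parallelogram_add {a b : ℝ} :
    Disjoint (interior (parallelogram a))
      (interior (IsometryEquiv.addRight (pt a a) '' parallelogram b)) :=
  disjoint_interior_of_le_of_ge (EuclideanSpace.isOpenMap_apply 1) (fun p hp => hp.2.1)
    fun p hp => by simpa using (mem_addRight_image_iff.1 hp).1

lemma tileableBy_parallelogram_natCast {n : ℕ} (hn : 0 < n) :
    TileableBy (parallelogram n) (2 * n) := by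
  induction n, hn using Nat.le_induction with
  | base => simpa using tileableBy_parallelogram_one
  | succ n _ ih =>
    rw [Nat.cast_succ, parallelogram_add n.cast_nonneg zero_le_one, mul_add_one]
    exact ih.union (tileableBy_parallelogram_one.image _) disjoint_interior_parallelogram_add

/-- For every positive integer `n`, the parallelogram with side lengths `1` and `n√2`
is tileable by `2n` copies of `T`. -/
theorem thin_parallelogram_family_tileable (n : ℕ) (hn : 0 < n) :
    TileableBy (convexHull ℝ {pt 0 0, pt 1 0, pt ((n : ℝ) + 1) (n : ℝ), pt (n : ℝ) (n : ℝ)})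
      (2 * n) := by
  rw [convexHull_eq_parallelogram (Nat.cast_pos.2 hn)]
  exact tileableBy_parallelogram_natCast hn
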